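/- arXiv:2503.16398 — 4 statements merged into one kernel-verified Lean document; each statement's English description precedes it below -/
import Mathlib

section
/- For any absolutely continuous path γ : [0,T] → ℝᵈ and any t ∈ [0,T], the potential difference Φ(γ(t)) - Φ(γ(0)) is bounded above by the action ∫₀ᵀ L(γ(s), γ̇(s)) ds, where Φ = 2 Ψ ∘ f with Ψ a primitive of 1/σ², and L(x,v) ≥ ‖v + ∇f(x)‖²/(2σ²(f(x))). -/
open MeasureTheory
open scoped RealInnerProductSpace

/-- For any (absolutely continuous, here differentiable with derivative `γ'`)
path `γ : [0,T] → ℝᵈ` and any `t ∈ [0,T]`, the potential difference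
`Φ(γ t) - Φ(γ 0)` is bounded by the action `∫₀ᵀ L(γ s, γ' s) ds`, where `Φ = 2 Ψ ∘ f`
with `Ψ` a primitive of `1/σ²` and `L(x,v) ≥ ‖v + ∇f(x)‖²/(2σ²(f x))`. -/
theorem stmt_3
    {E : Type*} [NormedAddCommGroup E] [InnerProductSpace ℝ E] [CompleteSpace E]
    (f : E → ℝ) (hf : ContDiff ℝ 2 f)
    (σ2 : ℝ → ℝ) (hσcont : Continuous σ2) (hσpos : ∀ s, 0 < σ2 s)
    (Ψ : ℝ → ℝ) (hΨ : ∀ s, HasDerivAt Ψ (1 / σ2 s) s)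
    (Φ : E → ℝ) (hΦ : ∀ x, Φ x = 2 * Ψ (f x))
    (L : E → E → ℝ) (hLnn : ∀ x v, 0 ≤ L x v)
    (hLlsc : LowerSemicontinuous (fun q : E × E => L q.1 q.2))
    (hLlb : ∀ x v, ‖v + gradient f x‖ ^ 2 / (2 * σ2 (f x)) ≤ L x v)
    (T : ℝ) (hT : 0 ≤ T)
    (γ γ' : ℝ → E) (hγ : ∀ t ∈ Set.Icc (0 : ℝ) T, HasDerivAt γ (γ' t) t)
    (hint : IntervalIntegrable (fun s => L (γ s) (γ' s)) volume 0 T)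
    (t : ℝ) (ht : t ∈ Set.Icc (0 : ℝ) T) :
    Φ (γ t) - Φ (γ 0) ≤ ∫ s in (0 : ℝ)..T, L (γ s) (γ' s) := by
  obtain ⟨ht0, htT⟩ := ht
  set g : ℝ → E := fun s => gradient f (γ s) with hg
  set D : ℝ → ℝ := fun s => 2 * ((1 / σ2 (f (γ s))) * ⟪g s, γ' s⟫) with hD
  have hfd : Differentiable ℝ f := hf.differentiable (by norm_num)
  -- derivative of Φ ∘ γ
  have hderiv : ∀ s ∈ Set.Icc (0 : ℝ) T, HasDerivAt (fun u => Φ (γ u)) (D s) s := by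
    intro s hs
    have h1 : HasDerivAt γ (γ' s) s := hγ s hs
    have h2 : HasFDerivAt f (InnerProductSpace.toDual ℝ E (g s)) (γ s) :=
      (hfd (γ s)).hasGradientAt.hasFDerivAt
    have h3 : HasDerivAt (fun u => f (γ u)) (⟪g s, γ' s⟫) s := by
      have h := h2.comp_hasDerivAt s h1
      simp at h
      exact h
    have h4 : HasDerivAt (fun u => Ψ (f (γ u)))
        ((1 / σ2 (f (γ s))) * ⟪g s, γ' s⟫) s :=
      (hΨ (f (γ s))).comp s h3
    have h5 := h4.const_mul (2 : ℝ)
    simp only [hΦ]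
    exact h5
  -- pointwise Young inequality : D s ≤ L (γ s) (γ' s)
  have hDL : ∀ s, D s ≤ L (γ s) (γ' s) := by
    intro s
    refine le_trans ?_ (hLlb (γ s) (γ' s))
    have hσ : 0 < σ2 (f (γ s)) := hσpos _
    have e1 : ‖γ' s + g s‖ ^ 2 = ‖γ' s‖ ^ 2 + 2 * ⟪γ' s, g s⟫ + ‖g s‖ ^ 2 := by
      rw [← real_inner_self_eq_norm_sq, ← real_inner_self_eq_norm_sq, ← real_inner_self_eq_norm_sq]
      simp [inner_add_add_self, real_inner_comm]
      rw [norm_add_sq_real]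
    have e2 : (0:ℝ) ≤ ‖γ' s - g s‖ ^ 2 := sq_nonneg _
    have e3 : ‖γ' s - g s‖ ^ 2 = ‖γ' s‖ ^ 2 - 2 * ⟪γ' s, g s⟫ + ‖g s‖ ^ 2 := by
      rw [← real_inner_self_eq_norm_sq, ← real_inner_self_eq_norm_sq, ← real_inner_self_eq_norm_sq]
      simp [inner_sub_sub_self, real_inner_comm]
      rw [norm_sub_sq_real]
    have key : 4 * ⟪g s, γ' s⟫ ≤ ‖γ' s + g s‖ ^ 2 := by
      rw [real_inner_comm]; nlinarith
    have : D s = (4 * ⟪g s, γ' s⟫) / (2 * σ2 (f (γ s))) := by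
      simp only [hD]; field_simp; ring
    rw [this]
    exact div_le_div_of_nonneg_right key (by positivity) |>.trans_eq rfl
  -- continuity of the bound term
  have hγcont : ContinuousOn γ (Set.Icc 0 T) :=
    fun s hs => (hγ s hs).continuousAt.continuousWithinAt
  have hgradcont : Continuous (fun x => gradient f x) := by
    have h1 : Continuous (fun x => fderiv ℝ f x) := hf.continuous_fderiv (by norm_num)
    exact (InnerProductSpace.toDual ℝ E).symm.continuous.comp h1
  have hbcont : ContinuousOn (fun s => 3 * ‖g s‖ ^ 2 / σ2 (f (γ s))) (Set.Icc 0 T) := by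
    apply ContinuousOn.div
    · exact (continuousOn_const.mul ((hgradcont.comp_continuousOn hγcont).norm.pow 2))
    · exact (hσcont.comp_continuousOn (hf.continuous.comp_continuousOn hγcont))
    · intro s hs; exact (hσpos _).ne'
  obtain ⟨C, hC⟩ := isCompact_Icc.exists_bound_of_continuousOn hbcont
  -- bound |D s| ≤ 2 L + C on Icc 0 T
  have hDabs : ∀ s ∈ Set.Icc (0:ℝ) T, |D s| ≤ 2 * L (γ s) (γ' s) + C := by
    intro s hs
    have hσ : 0 < σ2 (f (γ s)) := hσpos _
    have h1 : |⟪g s, γ' s⟫| ≤ ‖g s‖ * ‖γ' s‖ := abs_real_inner_le_norm _ _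
    have h2 : ‖γ' s‖ ≤ ‖γ' s + g s‖ + ‖g s‖ := by
      simpa using norm_sub_le (γ' s + g s) (g s)
    have key : 2 * |⟪g s, γ' s⟫| ≤ ‖γ' s + g s‖ ^ 2 + 3 * ‖g s‖ ^ 2 := by
      nlinarith [sq_nonneg (‖γ' s + g s‖ - ‖g s‖), norm_nonneg (g s), norm_nonneg (γ' s),
        norm_nonneg (γ' s + g s)]
    have e1 : |D s| = (2 * |⟪g s, γ' s⟫|) / σ2 (f (γ s)) := by
      rw [hD]
      rw [abs_mul, abs_mul, abs_of_nonneg (by positivity : (0:ℝ) ≤ 1 / σ2 (f (γ s)))]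
      field_simp
      rw [abs_two, mul_comm]
    have e2 : (2 * |⟪g s, γ' s⟫|) / σ2 (f (γ s))
        ≤ (‖γ' s + g s‖ ^ 2 + 3 * ‖g s‖ ^ 2) / σ2 (f (γ s)) :=
      div_le_div_of_nonneg_right key hσ.le |>.trans_eq rfl
    have e3 : (‖γ' s + g s‖ ^ 2 + 3 * ‖g s‖ ^ 2) / σ2 (f (γ s))
        = 2 * (‖γ' s + g s‖ ^ 2 / (2 * σ2 (f (γ s)))) + 3 * ‖g s‖ ^ 2 / σ2 (f (γ s)) := by
      field_simp
    have e4 : 3 * ‖g s‖ ^ 2 / σ2 (f (γ s)) ≤ C :=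
      (le_abs_self _).trans ((Real.norm_eq_abs _) ▸ hC s hs)
    have e5 := hLlb (γ s) (γ' s)
    rw [e1]
    calc (2 * |⟪g s, γ' s⟫|) / σ2 (f (γ s))
        ≤ (‖γ' s + g s‖ ^ 2 + 3 * ‖g s‖ ^ 2) / σ2 (f (γ s)) := e2
      _ = 2 * (‖γ' s + g s‖ ^ 2 / (2 * σ2 (f (γ s)))) + 3 * ‖g s‖ ^ 2 / σ2 (f (γ s)) := e3
      _ ≤ 2 * L (γ s) (γ' s) + C := by gcongr
  -- integrability of the bound on [0, t]
  have hsub : Set.uIcc (0:ℝ) t ⊆ Set.uIcc (0:ℝ) T := by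
    rw [Set.uIcc_of_le ht0, Set.uIcc_of_le (ht0.trans htT)]
    exact Set.Icc_subset_Icc le_rfl htT
  have hLint_t : IntervalIntegrable (fun s => L (γ s) (γ' s)) volume 0 t :=
    hint.mono_set hsub
  have hbint : IntervalIntegrable (fun s => 2 * L (γ s) (γ' s) + C) volume 0 t :=
    (hLint_t.const_mul 2).add intervalIntegrable_const
  -- D is a.e. strongly measurable and dominated, hence integrable
  have hIoc : Set.Ioc (0:ℝ) t ⊆ Set.Icc 0 T :=
    Set.Ioc_subset_Icc_self.trans (Set.Icc_subset_Icc le_rfl htT)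
  have hDae : D =ᵐ[volume.restrict (Set.Ioc (0:ℝ) t)] deriv (fun u => Φ (γ u)) := by
    rw [Filter.EventuallyEq, ae_restrict_iff' measurableSet_Ioc]
    exact Filter.Eventually.of_forall fun s hs => ((hderiv s (hIoc hs)).deriv).symm
  have hDint : IntervalIntegrable D volume 0 t := by
    rw [intervalIntegrable_iff_integrableOn_Ioc_of_le ht0]
    refine Integrable.mono' ((intervalIntegrable_iff_integrableOn_Ioc_of_le ht0).1 hbint)
      (((measurable_deriv _).aestronglyMeasurable).congr hDae.symm) ?_
    rw [ae_restrict_iff' measurableSet_Ioc]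
    refine Filter.Eventually.of_forall fun s hs => ?_
    simpa [Real.norm_eq_abs] using hDabs s (hIoc hs)
  -- FTC
  have hFTC : ∫ s in (0:ℝ)..t, D s = Φ (γ t) - Φ (γ 0) := by
    refine intervalIntegral.integral_eq_sub_of_hasDerivAt (f := fun u => Φ (γ u)) (fun s hs => ?_) hDint
    rw [Set.uIcc_of_le ht0] at hs
    exact hderiv s (Set.Icc_subset_Icc le_rfl htT hs)
  rw [← hFTC]
  calc ∫ s in (0:ℝ)..t, D s
      ≤ ∫ s in (0:ℝ)..t, L (γ s) (γ' s) :=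
        intervalIntegral.integral_mono_on ht0 hDint hLint_t (fun s _ => hDL s)
    _ ≤ ∫ s in (0:ℝ)..T, L (γ s) (γ' s) :=
        intervalIntegral.integral_mono_interval le_rfl ht0 htT
          (Filter.Eventually.of_forall fun s => hLnn _ _) hint
end

section
/- Consider a sequence x_{n+1} obtained by projecting x_n - η∇f(x_n) + η ε_n onto a closed set K. If the projections c_n of x_n onto a target set S satisfy ⟨∇f(x_n), x_n - c_n⟩ ≥ (μ/2)‖x_n - c_n‖², and ‖-∇f(x_n) + ε_n‖ ≤ G on K, then for all n: dist²(x_n, S) ≤ (1-μη)ⁿ dist²(x_0, S) + 2ηG²/μ + 2η M_{n-1}, where M_n = Σ_{k=0}^{n}(1-μη)^{n-k}⟨ε_k, x_k - c_k⟩. -/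
open scoped RealInnerProductSpace

/-- For the projected iteration `x_{n+1} = proj_K(x_n - η∇f(x_n) + η ε_n)`,
if projections `c_n` of `x_n` onto the target set `S ⊆ K` satisfy the quadratic growth
condition `⟨∇f(x_n), x_n - c_n⟩ ≥ (μ/2)‖x_n - c_n‖²` and `‖-∇f(x_n) + ε_n‖ ≤ G`, then
`dist²(x_n,S) ≤ (1-μη)ⁿ dist²(x_0,S) + 2ηG²/μ + 2η Σ_{k<n} (1-μη)^{n-1-k}⟨ε_k, x_k - c_k⟩`. -/
theorem stmt_10
    {E : Type*} [NormedAddCommGroup E] [InnerProductSpace ℝ E] [CompleteSpace E]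
    (f : E → ℝ) (hf : ContDiff ℝ 1 f)
    (K : Set E) (hKconv : Convex ℝ K) (hKclosed : IsClosed K)
    (S : Set E) (hSclosed : IsClosed S) (hSK : S ⊆ K) (hSne : S.Nonempty)
    (μ η G : ℝ) (hμ : 0 < μ) (hη : 0 < η) (hμη : μ * η < 1) (hG : 0 ≤ G)
    (x c : ℕ → E) (ε : ℕ → E)
    (hxK : ∀ n, x n ∈ K)
    (hc : ∀ n, c n ∈ S ∧ Metric.infDist (x n) S = ‖x n - c n‖)
    (hquad : ∀ n, μ / 2 * ‖x n - c n‖ ^ 2 ≤ ⟪gradient f (x n), x n - c n⟫)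
    (hGbd : ∀ n, ‖-gradient f (x n) + ε n‖ ≤ G)
    (hstep : ∀ n, ∀ y ∈ K,
      ‖x (n + 1) - (x n - η • gradient f (x n) + η • ε n)‖ ≤
        ‖y - (x n - η • gradient f (x n) + η • ε n)‖) :
    ∀ n : ℕ, Metric.infDist (x n) S ^ 2 ≤
      (1 - μ * η) ^ n * Metric.infDist (x 0) S ^ 2 + 2 * η * G ^ 2 / μ +
        2 * η * ∑ k ∈ Finset.range n, (1 - μ * η) ^ (n - 1 - k) * ⟪ε k, x k - c k⟫ := by

  have ha0 : (0:ℝ) < 1 - μ * η := by nlinarith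
  set a : ℝ := 1 - μ * η with ha_def
  clear_value a
  -- one-step recursion
  have key : ∀ m, Metric.infDist (x (m+1)) S ^ 2 ≤
      a * Metric.infDist (x m) S ^ 2 + η^2 * G^2 + 2*η*⟪ε m, x m - c m⟫ := by
    intro m
    set z := x m - η • gradient f (x m) + η • ε m with hz
    have hxK1 := hxK (m+1)
    have : Nonempty K := ⟨⟨hSne.choose, hSK hSne.choose_spec⟩⟩
    have hinf : ‖z - x (m+1)‖ = ⨅ w : K, ‖z - w‖ := by
      apply le_antisymm
      · exact le_ciInf fun w => by simpa [norm_sub_rev] using hstep m w w.2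
      · exact ciInf_le ⟨0, fun b ⟨w, hw⟩ => hw ▸ norm_nonneg _⟩ (⟨x (m+1), hxK1⟩ : K)
    have hvar := (norm_eq_iInf_iff_real_inner_le_zero hKconv hxK1).mp hinf
    have hcS := (hc m).1
    have hcK : c m ∈ K := hSK hcS
    have h2 := hvar (c m) hcK
    have expand : ‖z - c m‖^2 = ‖z - x (m+1)‖^2 - 2*⟪z - x (m+1), c m - x (m+1)⟫
        + ‖x (m+1) - c m‖^2 := by
      rw [show z - c m = (z - x (m+1)) - (c m - x (m+1)) by abel, norm_sub_sq_real,
        norm_sub_rev (c m)]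
    have h1 : ‖x (m+1) - c m‖^2 ≤ ‖z - c m‖^2 := by
      nlinarith [sq_nonneg ‖z - x (m+1)‖]
    have hzc : z - c m = (x m - c m) + η • (-gradient f (x m) + ε m) := by
      rw [hz]; simp [smul_add, smul_neg]; abel
    have hex : ‖z - c m‖^2 = ‖x m - c m‖^2
        + 2 * (η * ⟪x m - c m, -gradient f (x m) + ε m⟫)
        + η^2 * ‖-gradient f (x m) + ε m‖^2 := by
      rw [hzc, norm_add_sq_real, real_inner_smul_right, norm_smul]
      simp [mul_pow, abs_of_pos hη]
    have hip : ⟪x m - c m, -gradient f (x m) + ε m⟫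
        = -⟪gradient f (x m), x m - c m⟫ + ⟪ε m, x m - c m⟫ := by
      rw [real_inner_comm, inner_add_left, inner_neg_left]
    have hGn : ‖-gradient f (x m) + ε m‖^2 ≤ G^2 := by
      have := hGbd m
      nlinarith [norm_nonneg (-gradient f (x m) + ε m)]
    have hq := hquad m
    have hzcb : ‖z - c m‖^2 ≤ a * ‖x m - c m‖^2 + η^2*G^2 + 2*η*⟪ε m, x m - c m⟫ := by
      rw [hex, hip, ha_def]; nlinarith
    have hle : Metric.infDist (x (m+1)) S ≤ ‖x (m+1) - c m‖ := by
      simpa [dist_eq_norm] using Metric.infDist_le_dist_of_mem hcS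
    have hsq : Metric.infDist (x (m+1)) S ^ 2 ≤ ‖x (m+1) - c m‖^2 :=
      pow_le_pow_left₀ Metric.infDist_nonneg hle 2
    rw [(hc m).2]
    linarith
  intro n
  induction n with
  | zero =>
    have : (0:ℝ) ≤ 2 * η * G ^ 2 / μ := by positivity
    simp
    linarith
  | succ n ih =>
    have hK := key n
    have hmul := mul_le_mul_of_nonneg_left ih ha0.le
    have hsum : a * ∑ k ∈ Finset.range n, a^(n-1-k) * ⟪ε k, x k - c k⟫
        = ∑ k ∈ Finset.range n, a^(n-k) * ⟪ε k, x k - c k⟫ := by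
      rw [Finset.mul_sum]
      refine Finset.sum_congr rfl fun k hk => ?_
      have hkn : k < n := Finset.mem_range.mp hk
      rw [show n - k = (n - 1 - k) + 1 from by omega, pow_succ]; ring
    have hsum2 : ∑ k ∈ Finset.range (n+1), a^(n+1-1-k) * ⟪ε k, x k - c k⟫
        = ∑ k ∈ Finset.range n, a^(n-k) * ⟪ε k, x k - c k⟫ + ⟪ε n, x n - c n⟫ := by
      rw [Finset.sum_range_succ]
      simp
    have hg : a * (2 * η * G ^ 2 / μ) + η^2 * G^2 ≤ 2 * η * G ^ 2 / μ := by
      rw [ha_def]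
      have hμ' : μ ≠ 0 := ne_of_gt hμ
      field_simp
      nlinarith [sq_nonneg (μ*η*G), mul_pos hμ hη, sq_nonneg G]
    rw [hsum2, mul_add]
    have hpow : a * (a ^ n * Metric.infDist (x 0) S ^ 2)
        = a ^ (n+1) * Metric.infDist (x 0) S ^ 2 := by ring
    have hmul2 : a * Metric.infDist (x n) S ^ 2 ≤
        a ^ (n+1) * Metric.infDist (x 0) S ^ 2 + a * (2 * η * G ^ 2 / μ) +
          2 * η * ∑ k ∈ Finset.range n, a ^ (n - k) * ⟪ε k, x k - c k⟫ := by
      calc a * Metric.infDist (x n) S ^ 2 ≤ _ := hmul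
        _ = _ := by rw [← hsum]; ring
    linarith [hK, hmul2, hg, key n]
end

section
/- Let u, w ∈ ℝᵈ with 0 < ‖w‖ ≤ μR/2 (μ, R > 0), define F(z) = sup_{‖p‖ ≤ R} (⟨p, z⟩ - (μ/2)‖p‖²), and set λ = ‖u‖/‖w‖. Then λ F(u/λ + w) ≤ F(u + w). -/
open scoped RealInnerProductSpace

lemma aux_upper {E : Type*} [NormedAddCommGroup E] [InnerProductSpace ℝ E]
    (μ R : ℝ) (hμ : 0 < μ) (z : E) :
    (⨆ p ∈ Metric.closedBall (0 : E) R, (⟪p, z⟫ - μ / 2 * ‖p‖ ^ 2)) ≤ ‖z‖ ^ 2 / (2 * μ) := by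
  have hb : 0 ≤ ‖z‖ ^ 2 / (2 * μ) := by positivity
  refine Real.iSup_le (fun p => Real.iSup_le (fun _ => ?_) hb) hb
  have h1 : ⟪p, z⟫ ≤ ‖p‖ * ‖z‖ := real_inner_le_norm p z
  rw [le_div_iff₀ (by positivity)]
  nlinarith [sq_nonneg (μ * ‖p‖ - ‖z‖), hμ.le, norm_nonneg p, norm_nonneg z]

lemma aux_lower {E : Type*} [NormedAddCommGroup E] [InnerProductSpace ℝ E]
    (μ R : ℝ) (hμ : 0 < μ) (z p : E) (hp : p ∈ Metric.closedBall (0 : E) R) :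
    (⟪p, z⟫ - μ / 2 * ‖p‖ ^ 2) ≤ ⨆ q ∈ Metric.closedBall (0 : E) R, (⟪q, z⟫ - μ / 2 * ‖q‖ ^ 2) := by
  have hbdd : BddAbove (Set.range fun q : E => ⨆ _ : q ∈ Metric.closedBall (0 : E) R,
      (⟪q, z⟫ - μ / 2 * ‖q‖ ^ 2)) := by
    refine ⟨‖z‖ ^ 2 / (2 * μ), Set.forall_mem_range.2 fun q => ?_⟩
    have hb : 0 ≤ ‖z‖ ^ 2 / (2 * μ) := by positivity
    refine Real.iSup_le (fun _ => ?_) hb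
    have h1 : ⟪q, z⟫ ≤ ‖q‖ * ‖z‖ := real_inner_le_norm q z
    rw [le_div_iff₀ (by positivity)]
    nlinarith [sq_nonneg (μ * ‖q‖ - ‖z‖), hμ.le, norm_nonneg q, norm_nonneg z]
  refine le_ciSup_of_le hbdd p ?_
  rw [ciSup_pos hp]

/-- Let `F z = sup_{‖p‖ ≤ R} (⟨p,z⟩ - (μ/2)‖p‖²)` and let `u, w` satisfy
`0 < ‖w‖ ≤ μR/2`. Then with `λ = ‖u‖/‖w‖`, one has `λ F(u/λ + w) ≤ F(u + w)`. -/
theorem stmt_18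
    {E : Type*} [NormedAddCommGroup E] [InnerProductSpace ℝ E]
    (μ R : ℝ) (hμ : 0 < μ) (hR : 0 < R)
    (F : E → ℝ)
    (hF : ∀ z : E, F z = ⨆ p ∈ Metric.closedBall (0 : E) R, (⟪p, z⟫ - μ / 2 * ‖p‖ ^ 2))
    (u w : E) (hw : 0 < ‖w‖) (hwR : ‖w‖ ≤ μ * R / 2) :
    (‖u‖ / ‖w‖) * F ((‖u‖ / ‖w‖)⁻¹ • u + w) ≤ F (u + w) := by
  by_cases hu : u = 0
  · subst hu
    simp only [norm_zero, zero_div, zero_mul]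
    have h0 : (0 : E) ∈ Metric.closedBall (0 : E) R := by simp [hR.le]
    have := aux_lower μ R hμ (0 + w) 0 h0
    rw [hF]
    simpa using this
  set lam := ‖u‖ / ‖w‖ with hlam
  have hlampos : 0 < lam := div_pos (norm_pos_iff.2 hu) hw
  set z' : E := lam⁻¹ • u + w with hz'
  -- ‖lam⁻¹ • u‖ = ‖w‖
  have hnu : ‖lam⁻¹ • u‖ = ‖w‖ := by
    rw [norm_smul, Real.norm_eq_abs, abs_inv, abs_of_pos hlampos, hlam]
    field_simp
  set p : E := μ⁻¹ • z' with hp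
  have hpz : ‖p‖ = ‖z'‖ / μ := by
    rw [hp, norm_smul, Real.norm_eq_abs, abs_inv, abs_of_pos hμ]
    ring
  have hz'le : ‖z'‖ ≤ 2 * ‖w‖ := by
    calc ‖z'‖ ≤ ‖lam⁻¹ • u‖ + ‖w‖ := norm_add_le _ _
    _ = 2 * ‖w‖ := by rw [hnu]; ring
  have hpR : p ∈ Metric.closedBall (0 : E) R := by
    simp only [Metric.mem_closedBall, dist_zero_right]
    rw [hpz]
    rw [div_le_iff₀ hμ]
    calc ‖z'‖ ≤ 2 * ‖w‖ := hz'le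
    _ ≤ μ * R := by linarith
    _ = R * μ := by ring
  -- key inner product identity: ⟪z', w⟫ = ‖z'‖²/2
  have hkey : ⟪z', w⟫ = ‖z'‖ ^ 2 / 2 := by
    have h1 : ‖z' - w‖ = ‖w‖ := by rw [hz']; simp [hnu]
    have h2 : ‖z' - w‖ ^ 2 = ‖z'‖ ^ 2 - 2 * ⟪z', w⟫ + ‖w‖ ^ 2 := by
      rw [← real_inner_self_eq_norm_sq, ← real_inner_self_eq_norm_sq, ← real_inner_self_eq_norm_sq]
      simp [inner_sub_sub_self]
      rw [real_inner_comm w z']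
      linarith [norm_sub_sq_real z' w, real_inner_comm w z']
    rw [h1] at h2
    nlinarith
  have hu_eq : u = lam • z' - lam • w := by
    rw [hz']
    rw [smul_add, smul_smul, mul_inv_cancel₀ hlampos.ne', one_smul]
    abel
  -- compute ⟪p, u + w⟫ - μ/2 ‖p‖² = lam * ‖z'‖²/(2μ)
  have hval : ⟪p, u + w⟫ - μ / 2 * ‖p‖ ^ 2 = lam * (‖z'‖ ^ 2 / (2 * μ)) := by
    have hinner : ⟪z', u + w⟫ = lam * ‖z'‖ ^ 2 + (1 - lam) * (‖z'‖ ^ 2 / 2) := by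
      rw [hu_eq]
      have : lam • z' - lam • w + w = lam • z' + (1 - lam) • w := by
        rw [sub_smul, one_smul]; abel
      rw [this, inner_add_right, real_inner_smul_right, real_inner_smul_right,
        real_inner_self_eq_norm_sq, hkey]
    rw [hp, real_inner_smul_left, hinner, hpz]
    field_simp
    ring
  have hupper := aux_upper μ R hμ z'
  have hlower := aux_lower μ R hμ (u + w) p hpR
  rw [hF, hF]
  calc lam * (⨆ q ∈ Metric.closedBall (0 : E) R, (⟪q, z'⟫ - μ / 2 * ‖q‖ ^ 2))
      ≤ lam * (‖z'‖ ^ 2 / (2 * μ)) := by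
        exact mul_le_mul_of_nonneg_left hupper hlampos.le
    _ = ⟪p, u + w⟫ - μ / 2 * ‖p‖ ^ 2 := hval.symm
    _ ≤ _ := hlower
end

section
/- If a random vector ε on ℝᵈ has E[ε] = 0, covariance Cov(ε) ⪰ σ̱ I, and its cumulant generating function H(p) = log E[exp⟨p,ε⟩] is C² with ‖∇²H(p) - Cov(ε)‖ ≤ σ̱/2 for all ‖p‖ ≤ c (operator norm), then H(p) ≥ σ̱‖p‖²/4 for all ‖p‖ ≤ c, and H(p) ≥ σ̱ c ‖p‖/4 for all ‖p‖ > c. -/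
open MeasureTheory
open scoped RealInnerProductSpace

private lemma aux_abs_le_exp (x : ℝ) : |x| ≤ Real.exp x + Real.exp (-x) := by
  rcases le_or_gt 0 x with h | h
  · rw [abs_of_nonneg h]
    nlinarith [Real.add_one_le_exp x, Real.exp_pos (-x)]
  · rw [abs_of_neg h]
    nlinarith [Real.add_one_le_exp (-x), Real.exp_pos x]

private lemma aux_exp_abs_le (x : ℝ) : Real.exp |x| ≤ Real.exp x + Real.exp (-x) := by
  rcases le_or_gt 0 x with h | h
  · rw [abs_of_nonneg h]; nlinarith [Real.exp_pos (-x)]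
  · rw [abs_of_neg h]; nlinarith [Real.exp_pos x]

private lemma aux_sq_le (x : ℝ) : x ^ 2 ≤ 2 * (Real.exp x + Real.exp (-x)) := by
  have h1 : 1 + |x| + |x| ^ 2 / 2 ≤ Real.exp |x| := Real.quadratic_le_exp_of_nonneg (abs_nonneg x)
  have h2 := aux_exp_abs_le x
  have : x ^ 2 = |x| ^ 2 := (sq_abs x).symm
  nlinarith [abs_nonneg x]

private lemma aux_sq_le_exp_half (x : ℝ) (hx : 0 ≤ x) : x ^ 2 ≤ 8 * Real.exp (x / 2) := by
  have h1 : 1 + x / 2 + (x / 2) ^ 2 / 2 ≤ Real.exp (x / 2) :=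
    Real.quadratic_le_exp_of_nonneg (by linarith)
  nlinarith

private lemma aux_tail (K x : ℝ) (hK : 0 ≤ K) :
    x ^ 2 ≤ min (x ^ 2) (K ^ 2) + 8 * Real.exp (-(K / 2)) * (Real.exp x + Real.exp (-x)) := by
  rcases le_or_gt (x ^ 2) (K ^ 2) with h | h
  · rw [min_eq_left h]
    have := Real.exp_pos (-(K/2))
    have := Real.exp_pos x
    have := Real.exp_pos (-x)
    nlinarith
  · rw [min_eq_right h.le]
    have habs : K < |x| := by
      by_contra hcon
      push_neg at hcon
      nlinarith [abs_nonneg x, sq_abs x]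
    have h1 : x ^ 2 ≤ 8 * Real.exp (|x| / 2) := by
      have := aux_sq_le_exp_half |x| (abs_nonneg x)
      nlinarith [sq_abs x]
    have h2 : Real.exp (|x| / 2) ≤ Real.exp (-(K / 2)) * Real.exp |x| := by
      rw [← Real.exp_add]
      apply Real.exp_le_exp.2
      linarith
    have h3 := aux_exp_abs_le x
    have h4 := Real.exp_pos (-(K/2))
    nlinarith [Real.exp_pos |x|, sq_nonneg K]

private lemma aux_absmul (x t : ℝ) (ht : |t| ≤ 1) :
    |x * Real.exp (t * x)| ≤ Real.exp (2 * x) + Real.exp (-(2 * x)) := by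
  have h1 : |x * Real.exp (t * x)| = |x| * Real.exp (t * x) := by
    rw [abs_mul, abs_of_pos (Real.exp_pos _)]
  have h2 : t * x ≤ |x| := by
    calc t * x ≤ |t * x| := le_abs_self _
    _ = |t| * |x| := abs_mul t x
    _ ≤ 1 * |x| := by nlinarith [abs_nonneg x]
    _ = |x| := one_mul _
  have h3 : |x| * Real.exp (t * x) ≤ |x| * Real.exp |x| := by
    apply mul_le_mul_of_nonneg_left (Real.exp_le_exp.2 h2) (abs_nonneg x)
  have h4 : |x| * Real.exp |x| ≤ Real.exp (2 * |x|) := by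
    have h5 : |x| ≤ Real.exp |x| := by
      nlinarith [Real.add_one_le_exp |x|, abs_nonneg x]
    calc |x| * Real.exp |x| ≤ Real.exp |x| * Real.exp |x| :=
          mul_le_mul_of_nonneg_right h5 (Real.exp_pos _).le
    _ = Real.exp (2 * |x|) := by rw [← Real.exp_add]; ring_nf
  have h6 : Real.exp (2 * |x|) ≤ Real.exp (2 * x) + Real.exp (-(2 * x)) := by
    have := aux_exp_abs_le (2 * x)
    have : |2 * x| = 2 * |x| := by rw [abs_mul]; norm_num
    rcases le_or_gt 0 x with h | h
    · rw [abs_of_nonneg h]; nlinarith [Real.exp_pos (-(2*x))]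
    · rw [abs_of_neg h]
      have : 2 * -x = -(2*x) := by ring
      rw [this]
      nlinarith [Real.exp_pos (2*x)]
  linarith
open MeasureTheory
open scoped RealInnerProductSpace

private lemma aux_exp_abs_le' (x : ℝ) : Real.exp |x| ≤ Real.exp x + Real.exp (-x) := by
  rcases le_or_gt 0 x with h | h
  · rw [abs_of_nonneg h]; nlinarith [Real.exp_pos (-x)]
  · rw [abs_of_neg h]; nlinarith [Real.exp_pos x]

private lemma aux_infdim
    {E : Type*} [NormedAddCommGroup E] [InnerProductSpace ℝ E]
    [MeasurableSpace E] [BorelSpace E]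
    {Ω : Type*} [MeasurableSpace Ω] (P : Measure Ω) [IsProbabilityMeasure P]
    (ε : Ω → E) (hmeas : Measurable ε)
    (hint : ∀ p : E, Integrable (fun ω => Real.exp ⟪p, ε ω⟫) P)
    (σlow : ℝ) (hσ : 0 < σlow)
    (B : ContinuousMultilinearMap ℝ (fun _ : Fin 2 => E) ℝ)
    (hBcov : ∀ p q : E, B ![p, q] = ∫ ω, ⟪p, ε ω⟫ * ⟪q, ε ω⟫ ∂P)
    (hBlb : ∀ p : E, σlow * ‖p‖ ^ 2 ≤ B ![p, p])
    (r C : ℝ) (hr : 0 < r) (hC0 : 0 < C)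
    (hC : ∀ q : E, ‖q‖ < r → ∫ ω, Real.exp ⟪q, ε ω⟫ ∂P ≤ C)
    (hninf : ¬ FiniteDimensional ℝ E) : False := by
  classical
  -- orthonormal sequence
  obtain ⟨w, -, hw_on, hw_max⟩ := exists_maximal_orthonormal (orthonormal_empty ℝ E)
  have hw_inf : w.Infinite := by
    intro hwf
    apply hninf
    have hbot : (Submodule.span ℝ w)ᗮ = ⊥ :=
      (maximal_orthonormal_iff_orthogonalComplement_eq_bot hw_on).1 hw_max
    haveI : FiniteDimensional ℝ (Submodule.span ℝ w) := FiniteDimensional.span_of_finite ℝ hwf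
    haveI : CompleteSpace (Submodule.span ℝ w) := FiniteDimensional.complete ℝ _
    have htop : Submodule.span ℝ w = ⊤ := (Submodule.orthogonal_eq_bot_iff).1 hbot
    have : FiniteDimensional ℝ (⊤ : Submodule ℝ E) := htop ▸ inferInstance
    exact (Submodule.topEquiv : (⊤ : Submodule ℝ E) ≃ₗ[ℝ] E).finiteDimensional
  set e : ℕ → E := fun n => ((hw_inf.natEmbedding) n : E) with he_def
  have he_on : Orthonormal ℝ e := hw_on.comp _ (hw_inf.natEmbedding).injective
  have he_norm : ∀ n, ‖e n‖ = 1 := fun n => he_on.1 n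
  -- notation
  set r' : ℝ := r / 2 with hr'_def
  have hr' : 0 < r' := by positivity
  have hXmeas : ∀ q : E, Measurable fun ω => ⟪q, ε ω⟫ := fun q =>
    ((innerSL ℝ q).continuous.measurable).comp hmeas
  set q : ℕ → E := fun n => r' • e n with hq_def
  have hqnorm : ∀ n, ‖q n‖ = r' := by
    intro n
    rw [hq_def]
    simp only [norm_smul, he_norm n, mul_one, Real.norm_eq_abs, abs_of_pos hr']
  have hqlt : ∀ n, ‖q n‖ < r := fun n => by rw [hqnorm]; linarith
  have hqlt' : ∀ n, ‖-(q n)‖ < r := fun n => by rw [norm_neg, hqnorm]; linarith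
  set X : ℕ → Ω → ℝ := fun n ω => ⟪q n, ε ω⟫ with hX_def
  have hXm : ∀ n, Measurable (X n) := fun n => hXmeas (q n)
  have hEexp : ∀ n, ∫ ω, Real.exp (X n ω) ∂P ≤ C := fun n => hC (q n) (hqlt n)
  have hEexp' : ∀ n, ∫ ω, Real.exp (-(X n ω)) ∂P ≤ C := by
    intro n
    have := hC (-(q n)) (hqlt' n)
    simpa [inner_neg_left] using this
  have hintn : ∀ n, Integrable (fun ω => Real.exp (X n ω)) P := fun n => hint (q n)
  have hintn' : ∀ n, Integrable (fun ω => Real.exp (-(X n ω))) P := by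
    intro n
    have := hint (-(q n))
    simpa [inner_neg_left] using this
  -- integrability of X n ^ 2
  have hXsqint : ∀ n, Integrable (fun ω => (X n ω) ^ 2) P := by
    intro n
    refine (((hintn n).add (hintn' n)).const_mul 2).mono'
      (((hXm n).pow_const 2).aestronglyMeasurable) ?_
    filter_upwards with ω
    rw [Real.norm_eq_abs, abs_of_nonneg (sq_nonneg _)]
    exact aux_sq_le (X n ω)
  -- variance lower bound
  have hvar : ∀ n, σlow * r' ^ 2 ≤ ∫ ω, (X n ω) ^ 2 ∂P := by
    intro n
    have h1 := hBlb (q n)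
    rw [hqnorm n, hBcov (q n) (q n)] at h1
    simpa [pow_two] using h1
  -- choose K
  obtain ⟨K, hK0, hKsmall⟩ : ∃ K : ℝ, 0 ≤ K ∧
      8 * Real.exp (-(K / 2)) * (2 * C) < σlow * r' ^ 2 / 2 := by
    have htend : Filter.Tendsto (fun K : ℝ => 8 * Real.exp (-(K / 2)) * (2 * C))
        Filter.atTop (nhds 0) := by
      have h1 : Filter.Tendsto (fun K : ℝ => -(K / 2)) Filter.atTop Filter.atBot := by
        apply Filter.tendsto_neg_atBot_iff.2
        exact Filter.Tendsto.atTop_div_const two_pos Filter.tendsto_id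
      have h2 := (Real.tendsto_exp_atBot).comp h1
      have h3 := (h2.const_mul (8:ℝ)).mul_const (2 * C)
      simpa using h3
    have hpos : 0 < σlow * r' ^ 2 / 2 := by positivity
    have hev := (htend.eventually_lt_const hpos).and (Filter.eventually_ge_atTop (0:ℝ))
    obtain ⟨K, hK1, hK2⟩ := hev.exists
    exact ⟨K, hK2, hK1⟩
  -- tail bound
  have htail : ∀ n, ∫ ω, (X n ω) ^ 2 ∂P ≤
      (∫ ω, min ((X n ω) ^ 2) (K ^ 2) ∂P) + 8 * Real.exp (-(K / 2)) * (2 * C) := by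
    intro n
    have hminint : Integrable (fun ω => min ((X n ω) ^ 2) (K ^ 2)) P := by
      refine (integrable_const (K ^ 2)).mono'
        (((hXm n).pow_const 2).min measurable_const).aestronglyMeasurable ?_
      filter_upwards with ω
      rw [Real.norm_eq_abs, abs_of_nonneg (le_min (sq_nonneg _) (sq_nonneg _))]
      exact min_le_right _ _
    have h1 : ∫ ω, (X n ω) ^ 2 ∂P ≤
        ∫ ω, (min ((X n ω) ^ 2) (K ^ 2) +
          8 * Real.exp (-(K / 2)) * (Real.exp (X n ω) + Real.exp (-(X n ω)))) ∂P := by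
      refine integral_mono (hXsqint n) ?_ ?_
      · exact hminint.add ((((hintn n).add (hintn' n))).const_mul _)
      · intro ω
        exact aux_tail K (X n ω) hK0
    have hG : Integrable (fun ω => Real.exp (X n ω) + Real.exp (-(X n ω))) P :=
      (hintn n).add (hintn' n)
    have hadd : ∫ ω, (min ((X n ω) ^ 2) (K ^ 2) +
          8 * Real.exp (-(K / 2)) * (Real.exp (X n ω) + Real.exp (-(X n ω)))) ∂P
        = (∫ ω, min ((X n ω) ^ 2) (K ^ 2) ∂P) +
          ∫ ω, 8 * Real.exp (-(K / 2)) * (Real.exp (X n ω) + Real.exp (-(X n ω))) ∂P :=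
      integral_add hminint (hG.const_mul _)
    have hmul : ∫ ω, 8 * Real.exp (-(K / 2)) * (Real.exp (X n ω) + Real.exp (-(X n ω))) ∂P
        = 8 * Real.exp (-(K / 2)) *
          ((∫ ω, Real.exp (X n ω) ∂P) + ∫ ω, Real.exp (-(X n ω)) ∂P) := by
      rw [integral_const_mul, integral_add (hintn n) (hintn' n)]
    rw [hadd, hmul] at h1
    have h2 : (∫ ω, Real.exp (X n ω) ∂P) + ∫ ω, Real.exp (-(X n ω)) ∂P ≤ 2 * C := by
      have := hEexp n; have := hEexp' n; linarith
    have h3 : 8 * Real.exp (-(K / 2)) *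
        ((∫ ω, Real.exp (X n ω) ∂P) + ∫ ω, Real.exp (-(X n ω)) ∂P) ≤
        8 * Real.exp (-(K / 2)) * (2 * C) := by
      apply mul_le_mul_of_nonneg_left h2 (by positivity)
    linarith
  -- convergence to zero of truncated moments
  have hconv : Filter.Tendsto (fun n => ∫ ω, min ((X n ω) ^ 2) (K ^ 2) ∂P)
      Filter.atTop (nhds 0) := by
    have h0 : (0:ℝ) = ∫ _ω, (0:ℝ) ∂P := by simp
    rw [h0]
    apply tendsto_integral_of_dominated_convergence (fun _ => K ^ 2)
    · exact fun n => (((hXm n).pow_const 2).min measurable_const).aestronglyMeasurable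
    · exact integrable_const _
    · intro n
      filter_upwards with ω
      rw [Real.norm_eq_abs, abs_of_nonneg (le_min (sq_nonneg _) (sq_nonneg _))]
      exact min_le_right _ _
    · filter_upwards with ω
      -- pointwise convergence
      have hsum : Summable fun n => ‖⟪e n, ε ω⟫‖ ^ 2 := he_on.inner_products_summable (ε ω)
      have h1 : Filter.Tendsto (fun n => ‖⟪e n, ε ω⟫‖ ^ 2) Filter.atTop (nhds 0) :=
        hsum.tendsto_atTop_zero
      have h2 : Filter.Tendsto (fun n => r' ^ 2 * ‖⟪e n, ε ω⟫‖ ^ 2) Filter.atTop (nhds 0) := by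
        simpa using h1.const_mul (r' ^ 2)
      have hXval : ∀ n, (X n ω) ^ 2 = r' ^ 2 * ‖⟪e n, ε ω⟫‖ ^ 2 := by
        intro n
        rw [hX_def]
        simp only [hq_def, real_inner_smul_left, Real.norm_eq_abs, sq_abs]
        ring
      apply squeeze_zero (fun n => le_min (sq_nonneg _) (sq_nonneg _))
        (fun n => min_le_left _ _)
      simpa only [← hXval] using h2
  -- contradiction
  have hev2 := hconv.eventually_lt_const (show (0:ℝ) < σlow * r' ^ 2 / 2 by positivity)
  obtain ⟨n, hn⟩ := hev2.exists
  have := hvar n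
  have := htail n
  linarith

/-- If a centered random vector `ε` has covariance bounded below by `σ̱ I`
(as a bilinear form `B`), and its cumulant generating function `H` is C² with
`‖∇²H(p) - Cov(ε)‖ ≤ σ̱/2` for all `‖p‖ ≤ c`, then `H p ≥ σ̱‖p‖²/4` for `‖p‖ ≤ c`, and
`H p ≥ σ̱ c ‖p‖/4` for `‖p‖ > c`. -/
theorem stmt_19
    {E : Type*} [NormedAddCommGroup E] [InnerProductSpace ℝ E]
    [MeasurableSpace E] [BorelSpace E]
    {Ω : Type*} [MeasurableSpace Ω] (P : Measure Ω) [IsProbabilityMeasure P]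
    (ε : Ω → E) (hmeas : Measurable ε)
    (hint : ∀ p : E, Integrable (fun ω => Real.exp ⟪p, ε ω⟫) P)
    (hmean : (∫ ω, ε ω ∂P) = 0)
    (σlow c : ℝ) (hσ : 0 < σlow) (hc : 0 < c)
    (B : ContinuousMultilinearMap ℝ (fun _ : Fin 2 => E) ℝ)
    (hBcov : ∀ p q : E, B ![p, q] = ∫ ω, ⟪p, ε ω⟫ * ⟪q, ε ω⟫ ∂P)
    (hBlb : ∀ p : E, σlow * ‖p‖ ^ 2 ≤ B ![p, p])
    (H : E → ℝ) (hH : ∀ p, H p = Real.log (∫ ω, Real.exp ⟪p, ε ω⟫ ∂P))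
    (hHsmooth : ContDiff ℝ 2 H)
    (hHess : ∀ p : E, ‖p‖ ≤ c → ‖iteratedFDeriv ℝ 2 H p - B‖ ≤ σlow / 2) :
    (∀ p : E, ‖p‖ ≤ c → σlow * ‖p‖ ^ 2 / 4 ≤ H p) ∧
    (∀ p : E, c < ‖p‖ → σlow * c * ‖p‖ / 4 ≤ H p) := by
  classical
  have hXmeas : ∀ p : E, Measurable fun ω => ⟪p, ε ω⟫ := fun p =>
    ((innerSL ℝ p).continuous.measurable).comp hmeas
  have hXint : ∀ p : E, Integrable (fun ω => ⟪p, ε ω⟫) P := by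
    intro p
    have hneg : Integrable (fun ω => Real.exp (-⟪p, ε ω⟫)) P := by
      have := hint (-p); simpa [inner_neg_left] using this
    refine ((hint p).add hneg).mono' ((hXmeas p).aestronglyMeasurable) ?_
    filter_upwards with ω
    rw [Real.norm_eq_abs]
    exact aux_abs_le_exp _
  have hmgf_pos : ∀ p : E, 0 < ∫ ω, Real.exp ⟪p, ε ω⟫ ∂P := by
    intro p
    rw [integral_pos_iff_support_of_nonneg (fun ω => (Real.exp_pos _).le) (hint p)]
    have : (Function.support fun ω => Real.exp ⟪p, ε ω⟫) = Set.univ :=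
      Set.eq_univ_of_forall fun ω => (Real.exp_pos _).ne'
    rw [this]
    simp
  have hH0 : H 0 = 0 := by
    rw [hH]
    simp
  by_cases hfin : FiniteDimensional ℝ E
  case neg =>
    exfalso
    -- continuity of H at 0 gives a uniform mgf bound near 0
    have hcont : ContinuousAt H 0 := hHsmooth.continuous.continuousAt
    obtain ⟨r, hr, hball⟩ := Metric.continuousAt_iff.1 hcont 1 one_pos
    have hCb : ∀ q : E, ‖q‖ < r → ∫ ω, Real.exp ⟪q, ε ω⟫ ∂P ≤ Real.exp 1 := by
      intro q hq
      have h1 : dist q 0 < r := by simpa [dist_eq_norm] using hq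
      have h2 := hball h1
      rw [hH0, dist_eq_norm, sub_zero, Real.norm_eq_abs] at h2
      have h3 : H q < 1 := (le_abs_self _).trans_lt h2
      have h4 : ∫ ω, Real.exp ⟪q, ε ω⟫ ∂P = Real.exp (H q) := by
        rw [hH, Real.exp_log (hmgf_pos q)]
      rw [h4]
      exact (Real.exp_le_exp.2 h3.le)
    exact aux_infdim P ε hmeas hint σlow hσ B hBcov hBlb r (Real.exp 1) hr
      (Real.exp_pos 1) hCb hfin
  case pos =>
    haveI := hfin
    haveI : CompleteSpace E := FiniteDimensional.complete ℝ E
    haveI : ProperSpace E := FiniteDimensional.proper_real E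
    -- ε is integrable
    have hεint : Integrable ε P := by
      set b := stdOrthonormalBasis ℝ E with hb
      refine Integrable.mono' (g := fun ω => ∑ i, ‖⟪b i, ε ω⟫‖) ?_
        hmeas.aestronglyMeasurable ?_
      · apply integrable_finset_sum
        intro i _
        simpa [Real.norm_eq_abs] using (hXint (b i)).abs
      · filter_upwards with ω
        have hrep : ∑ i, ⟪b i, ε ω⟫ • b i = ε ω := by
          simpa [OrthonormalBasis.repr_apply_apply] using b.sum_repr (ε ω)
        calc ‖ε ω‖ = ‖∑ i, ⟪b i, ε ω⟫ • b i‖ := by rw [hrep]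
        _ ≤ ∑ i, ‖⟪b i, ε ω⟫ • b i‖ := norm_sum_le _ _
        _ = ∑ i, ‖⟪b i, ε ω⟫‖ := by
            apply Finset.sum_congr rfl
            intro i _
            rw [norm_smul, b.orthonormal.1 i, mul_one]
    have hm : ∀ p : E, ∫ ω, ⟪p, ε ω⟫ ∂P = 0 := by
      intro p
      rw [integral_inner hεint p, hmean, inner_zero_right]
    -- main quantitative claim for small p
    have part1 : ∀ p : E, ‖p‖ ≤ c → σlow * ‖p‖ ^ 2 / 4 ≤ H p := by
      intro p hpc
      set X : Ω → ℝ := fun ω => ⟪p, ε ω⟫ with hXdef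
      have hMint : ∀ t : ℝ, Integrable (fun ω => Real.exp (t * X ω)) P := by
        intro t
        have := hint (t • p)
        simpa [real_inner_smul_left] using this
      set M : ℝ → ℝ := fun t => ∫ ω, Real.exp (t * X ω) ∂P with hMdef
      have hMpos : ∀ t : ℝ, 0 < M t := by
        intro t
        have := hmgf_pos (t • p)
        simpa [real_inner_smul_left] using this
      have hφeq : (fun t : ℝ => H (t • p)) = fun t => Real.log (M t) := by
        funext t
        rw [hH]
        congr 1
        simp [real_inner_smul_left]
        rfl
      set φ : ℝ → ℝ := fun t => H (t • p) with hφdef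
      -- derivative of M at 0
      have hMder : HasDerivAt M 0 0 := by
        have hbint : Integrable (fun ω => Real.exp (2 * X ω) + Real.exp (-(2 * X ω))) P := by
          refine (hMint 2).add ?_
          have := hMint (-2)
          refine this.congr ?_
          filter_upwards with ω
          norm_num
        have hder := hasDerivAt_integral_of_dominated_loc_of_deriv_le
          (F := fun t ω => Real.exp (t * X ω))
          (F' := fun t ω => Real.exp (t * X ω) * X ω)
          (x₀ := (0:ℝ))
          (bound := fun ω => Real.exp (2 * X ω) + Real.exp (-(2 * X ω)))
          (Metric.ball_mem_nhds (0:ℝ) one_pos)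
          (Filter.Eventually.of_forall fun t =>
            ((Real.measurable_exp.comp ((hXmeas p).const_mul t)).aestronglyMeasurable))
          (hMint 0)
          (((Real.measurable_exp.comp ((hXmeas p).const_mul 0)).mul
            (hXmeas p)).aestronglyMeasurable)
          ?_ hbint ?_
        · obtain ⟨-, hd⟩ := hder
          have hzero : (fun ω => Real.exp (0 * X ω) * X ω) = fun ω => X ω := by
            funext ω; simp
          rw [hzero] at hd
          rw [hXdef] at hd
          rw [hm p] at hd
          exact hd
        · filter_upwards with ω
          intro t ht
          rw [Metric.mem_ball, Real.dist_eq, sub_zero] at ht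
          have := aux_absmul (X ω) t ht.le
          rw [Real.norm_eq_abs]
          calc |Real.exp (t * X ω) * X ω| = |X ω * Real.exp (t * X ω)| := by rw [mul_comm]
          _ ≤ _ := this
        · filter_upwards with ω
          intro t ht
          exact (hasDerivAt_mul_const (X ω)).exp
      have hφder0 : HasDerivAt φ 0 0 := by
        have hlog := hMder.log (hMpos 0).ne'
        have h2 : HasDerivAt (fun t => Real.log (M t)) 0 0 := by simpa using hlog
        rwa [← hφeq] at h2
      -- first derivative function
      have hHdiff : Differentiable ℝ H := hHsmooth.differentiable two_ne_zero
      have hline : ∀ t : ℝ, HasDerivAt (fun s : ℝ => s • p) p t := by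
        intro t
        simpa using (hasDerivAt_id t).smul_const p
      set φ' : ℝ → ℝ := fun t => (fderiv ℝ H (t • p)) p with hφ'def
      have hφd : ∀ t : ℝ, HasDerivAt φ (φ' t) t := fun t =>
        ((hHdiff (t • p)).hasFDerivAt).comp_hasDerivAt t (hline t)
      have hφ'0 : φ' 0 = 0 := (hφd 0).unique hφder0
      -- second derivative
      have hfd : ContDiff ℝ 1 (fderiv ℝ H) :=
        hHsmooth.fderiv_right (by norm_num)
      have hφ'd : ∀ t : ℝ, HasDerivAt φ' (iteratedFDeriv ℝ 2 H (t • p) ![p, p]) t := by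
        intro t
        have h1 : HasDerivAt (fun s : ℝ => fderiv ℝ H (s • p))
            ((fderiv ℝ (fderiv ℝ H) (t • p)) p) t :=
          (((hfd.differentiable one_ne_zero) (t • p)).hasFDerivAt).comp_hasDerivAt t (hline t)
        have h2 := h1.clm_apply (hasDerivAt_const t p)
        rw [iteratedFDeriv_two_apply]
        simpa using h2
      -- Hessian lower bound on the segment
      set a : ℝ := σlow * ‖p‖ ^ 2 / 2 with hadef
      have hlower : ∀ t ∈ Set.Icc (0:ℝ) 1, a ≤ iteratedFDeriv ℝ 2 H (t • p) ![p, p] := by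
        intro t ht
        have hnorm : ‖t • p‖ ≤ c := by
          rw [norm_smul, Real.norm_eq_abs, abs_of_nonneg ht.1]
          nlinarith [norm_nonneg p, ht.2]
        have h1 := hHess (t • p) hnorm
        have h2 : ‖(iteratedFDeriv ℝ 2 H (t • p) - B) ![p, p]‖ ≤ (σlow / 2) * (‖p‖ * ‖p‖) := by
          refine le_trans ((iteratedFDeriv ℝ 2 H (t • p) - B).le_opNorm ![p, p]) ?_
          have hprod : (∏ i : Fin 2, ‖(![p, p] : Fin 2 → E) i‖) = ‖p‖ * ‖p‖ := by
            simp [Fin.prod_univ_two]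
          rw [hprod]
          exact mul_le_mul_of_nonneg_right h1 (by positivity)
        have h4 : |iteratedFDeriv ℝ 2 H (t • p) ![p, p] - B ![p, p]| ≤ σlow / 2 * (‖p‖ * ‖p‖) := by
          simpa [ContinuousMultilinearMap.sub_apply, Real.norm_eq_abs] using h2
        have h5 := (abs_le.1 h4).1
        have h3 := hBlb p
        rw [hadef]
        nlinarith [sq_nonneg ‖p‖]
      -- first monotonicity: φ' t ≥ a * t on [0,1]
      have hg1d : ∀ t : ℝ, HasDerivAt (fun s => φ' s - a * s)
          (iteratedFDeriv ℝ 2 H (t • p) ![p, p] - a) t := by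
        intro t
        have h1 : HasDerivAt (fun s : ℝ => a * s) a t := by
          simpa using (hasDerivAt_id t).const_mul a
        exact (hφ'd t).sub h1
      have mono1 : MonotoneOn (fun s => φ' s - a * s) (Set.Icc (0:ℝ) 1) := by
        apply monotoneOn_of_deriv_nonneg (convex_Icc 0 1)
        · exact fun t _ => ((hg1d t).continuousAt).continuousWithinAt
        · exact fun t _ => ((hg1d t).differentiableAt).differentiableWithinAt
        · intro t ht
          rw [interior_Icc] at ht
          rw [(hg1d t).deriv]
          have := hlower t ⟨ht.1.le, ht.2.le⟩
          linarith
      have hφ'lb : ∀ t ∈ Set.Icc (0:ℝ) 1, a * t ≤ φ' t := by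
        intro t ht
        have h1 := mono1 (Set.left_mem_Icc.2 zero_le_one) ht ht.1
        simp only [mul_zero, sub_zero, hφ'0] at h1
        linarith
      -- second monotonicity: φ t ≥ a * t^2/2 on [0,1]
      have hg2d : ∀ t : ℝ, HasDerivAt (fun s => φ s - a / 2 * s ^ 2) (φ' t - a * t) t := by
        intro t
        have h1 : HasDerivAt (fun s : ℝ => a / 2 * s ^ 2) (a * t) t := by
          have := (hasDerivAt_pow 2 t).const_mul (a / 2)
          convert this using 1
          · rfl
          · rfl
          · norm_num; ring
        exact (hφd t).sub h1
      have mono2 : MonotoneOn (fun s => φ s - a / 2 * s ^ 2) (Set.Icc (0:ℝ) 1) := by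
        apply monotoneOn_of_deriv_nonneg (convex_Icc 0 1)
        · exact fun t _ => ((hg2d t).continuousAt).continuousWithinAt
        · exact fun t _ => ((hg2d t).differentiableAt).differentiableWithinAt
        · intro t ht
          rw [interior_Icc] at ht
          rw [(hg2d t).deriv]
          have := hφ'lb t ⟨ht.1.le, ht.2.le⟩
          linarith
      have hfinal := mono2 (Set.left_mem_Icc.2 zero_le_one)
        (Set.right_mem_Icc.2 zero_le_one) zero_le_one
      have hφ0val : φ 0 = 0 := by
        rw [hφdef]
        simpa using hH0
      have hφ1val : φ 1 = H p := by rw [hφdef]; simp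
      simp only [hφ0val, hφ1val] at hfinal
      rw [hadef] at hfinal
      norm_num at hfinal
      linarith
    refine ⟨part1, ?_⟩
    -- large p : use convexity via AM-GM (Hölder)
    intro p hpc
    have hp0 : 0 < ‖p‖ := hc.trans hpc
    set t : ℝ := c / ‖p‖ with htdef
    have ht0 : 0 < t := by positivity
    have ht1 : t < 1 := (div_lt_one hp0).2 hpc
    set q : E := t • p with hqdef
    have hqnorm : ‖q‖ = c := by
      rw [hqdef, norm_smul, Real.norm_eq_abs, abs_of_pos ht0, htdef]
      field_simp
    have h1 : σlow * c ^ 2 / 4 ≤ H q := by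
      have := part1 q (le_of_eq hqnorm)
      rwa [hqnorm] at this
    -- Hölder: H q ≤ t * H p
    set M1 : ℝ := ∫ ω, Real.exp ⟪p, ε ω⟫ ∂P with hM1def
    have hM1pos : 0 < M1 := hmgf_pos p
    have hpoint : ∀ ω : Ω, Real.exp (t * ⟪p, ε ω⟫) / M1 ^ t ≤
        t * (Real.exp ⟪p, ε ω⟫ / M1) + (1 - t) := by
      intro ω
      have hge := Real.geom_mean_le_arith_mean2_weighted
        (w₁ := t) (w₂ := 1 - t) (p₁ := Real.exp ⟪p, ε ω⟫ / M1) (p₂ := 1)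
        ht0.le (by linarith) (by positivity) zero_le_one (by ring)
      rw [Real.one_rpow, mul_one, mul_one] at hge
      rw [Real.div_rpow (Real.exp_pos _).le hM1pos.le] at hge
      rw [← Real.exp_mul, mul_comm] at hge
      exact hge
    have hMq : (∫ ω, Real.exp ⟪q, ε ω⟫ ∂P) ≤ M1 ^ t := by
      have hL : Integrable (fun ω => Real.exp (t * ⟪p, ε ω⟫) / M1 ^ t) P := by
        have := hint q
        rw [hqdef] at this
        simp only [real_inner_smul_left] at this
        exact this.div_const _
      have hR : Integrable (fun ω => t * (Real.exp ⟪p, ε ω⟫ / M1) + (1 - t)) P :=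
        (((hint p).div_const M1).const_mul t).add (integrable_const _)
      have h2 := integral_mono hL hR (fun ω => hpoint ω)
      rw [integral_add (((hint p).div_const M1).const_mul t) (integrable_const _)] at h2
      rw [integral_const_mul, integral_div] at h2
      rw [integral_div] at h2
      rw [← hM1def, div_self hM1pos.ne', mul_one, integral_const] at h2
      simp only [probReal_univ, measure_univ, ENNReal.toReal_one, smul_eq_mul, one_mul] at h2
      have hqin : (∫ ω, Real.exp ⟪q, ε ω⟫ ∂P) = ∫ ω, Real.exp (t * ⟪p, ε ω⟫) ∂P := by
        rw [hqdef]
        simp [real_inner_smul_left]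
      rw [hqin]
      have hMt : 0 < M1 ^ t := Real.rpow_pos_of_pos hM1pos t
      rw [div_le_iff₀ hMt] at h2
      calc (∫ ω, Real.exp (t * ⟪p, ε ω⟫) ∂P) ≤ (t + (1 - t)) * M1 ^ t := h2
      _ = M1 ^ t := by ring
    have h2 : H q ≤ t * H p := by
      rw [hH q, hH p, ← hM1def, ← Real.log_rpow hM1pos]
      exact Real.log_le_log (hmgf_pos q) hMq
    have h3 : σlow * c ^ 2 / 4 ≤ t * H p := le_trans h1 h2
    have h5 := mul_le_mul_of_nonneg_right h3 (norm_nonneg p)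
    have h6 : t * H p * ‖p‖ = c * H p := by
      rw [htdef]
      field_simp
    rw [h6] at h5
    nlinarith
end
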